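/- arXiv:0910.0530 — 2 statements merged into one kernel-verified Lean document; each statement's English description precedes it below -/
import Mathlib

section
/- Let $Y$ be a locally connected topological space, $X$ a topological space, $F \colon Y \to X$ a continuous map, $p^* \in X$, and set $M := F^{-1}(\{p^*\})$. Assume $M$ is closed (e.g. $X$ is $T_1$), and let $O$ be a connected component of $Y \setminus M$. Then the map $G \colon Y \to X$ defined by $G(y) = F(y)$ for $y \in O$ and $G(y) = p^*$ for $y \notin O$ is continuous. -/
open scoped Classical

/-- Let `Y` be locally connected, `F : Y → X` continuous, `M = F ⁻¹' {p*}` closed,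
and `O` a connected component of `Y \ M`.  Then the map equal to `F` on `O` and to
`p*` elsewhere is continuous. -/
theorem stmt_4 {Y X : Type*} [TopologicalSpace Y] [TopologicalSpace X]
    [LocallyConnectedSpace Y]
    (F : Y → X) (hF : Continuous F) (pstar : X)
    (hM : IsClosed (F ⁻¹' {pstar}))
    (y₀ : Y) (hy₀ : y₀ ∈ (F ⁻¹' {pstar})ᶜ)
    (O : Set Y) (hO : O = connectedComponentIn (F ⁻¹' {pstar})ᶜ y₀)
    (G : Y → X) (hG : ∀ y, G y = if y ∈ O then F y else pstar) :
    Continuous G := by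
  have hU : IsOpen (F ⁻¹' {pstar})ᶜ := hM.isOpen_compl
  have hOopen : IsOpen O := hO ▸ hU.connectedComponentIn
  have hOsub : O ⊆ (F ⁻¹' {pstar})ᶜ := hO ▸ connectedComponentIn_subset _ _
  -- frontier points map to pstar
  have hfront : ∀ a ∈ frontier O, F a = pstar := by
    intro a ha
    by_contra hne
    have haU : a ∈ (F ⁻¹' {pstar})ᶜ := hne
    have hca : IsOpen (connectedComponentIn (F ⁻¹' {pstar})ᶜ a) :=
      hU.connectedComponentIn
    have hmem : a ∈ connectedComponentIn (F ⁻¹' {pstar})ᶜ a :=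
      mem_connectedComponentIn haU
    have hacl : a ∈ closure O := ha.1
    obtain ⟨b, hbC, hbO⟩ :=
      mem_closure_iff.mp hacl _ hca hmem
    have : connectedComponentIn (F ⁻¹' {pstar})ᶜ a = O := by
      rw [hO, connectedComponentIn_eq hbC]
      exact (connectedComponentIn_eq (hO ▸ hbO : b ∈ connectedComponentIn _ y₀)).symm
    have haO : a ∈ O := this ▸ hmem
    exact ha.2 (by rwa [hOopen.interior_eq])
  have : G = fun y => if y ∈ O then F y else pstar := funext hG
  rw [this]
  exact Continuous.if (fun a ha => hfront a ha) hF continuous_const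
end

section
/- Let $X$ be a Hausdorff topological space, $p_1, p^* \in X$ distinct points, and $f \colon [0,1] \to X$ a loop with $f(0) = f(1) = p_1$ such that $f^{-1}(\{p^*\}) = \{s_0\}$ for some $s_0 \in (0,1)$. Let $F \colon [0,1]\times[0,1] \to X$ be a continuous map with $F(s,0) = f(s)$ and $F(s,1) = F(0,t) = F(1,t) = p_1$ for all $s,t \in [0,1]$. Let $M_0$ be the connected component of $F^{-1}(\{p^*\})$ containing $(s_0, 0)$, and let $O$ be the connected component of $([0,1]\times[0,1]) \setminus M_0$ containing $[0,1] \times \{1\}$. Define $G \colon [0,1]\times[0,1] \to X$ by $G(s,t) = F(s,t)$ if $(s,t) \in O$ and $G(s,t) = p^*$ otherwise. Then $G$ is continuous, satisfies $G(s,0) = f(s)$ and $G(s,1) = G(0,t) = G(1,t) = p_1$ for all $s,t \in [0,1]$ (so $G$ is again a null-homotopy of $f$ rel endpoints), and for every point $p_0 \in X$ not in the image of $f$ and distinct from $p^*$ and $p_1$, the preimage $G^{-1}(\{p_0\})$ is contained in $O$. -/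
/-!
`O` is a component of the open set `M₀ᶜ` of the locally connected square, so its frontier lies
in `M₀ ⊆ F ⁻¹' {p*}`; hence replacing `F` by the constant `p*` off `O` keeps it continuous.
The boundary of the square with `(s₀, 0)` removed is connected, contains `(0, 1)` and misses
`F ⁻¹' {p*}`, so it lies in `O`, where `G = F`; at `(s₀, 0)` both values equal `f s₀ = p*`.
-/

open scoped Classical

open Set

instance unitInterval.instLocallyPathConnectedSpace : LocallyPathConnectedSpace unitInterval :=
  (convex_Icc (0 : ℝ) 1).locallyPathConnectedSpace

section ConnectedComponentIn

variable {α : Type*} [TopologicalSpace α]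

protected theorem IsClosed.connectedComponentIn {F : Set α} (hF : IsClosed F) (x : α) :
    IsClosed (connectedComponentIn F x) := by
  by_cases hx : x ∈ F
  · refine closure_subset_iff_isClosed.mp <|
      isPreconnected_connectedComponentIn.closure.subset_connectedComponentIn
        (subset_closure (mem_connectedComponentIn hx)) ?_
    exact hF.closure_subset_iff.mpr (connectedComponentIn_subset F x)
  · rw [connectedComponentIn_eq_empty hx]
    exact isClosed_empty

theorem frontier_connectedComponentIn_subset [LocallyConnectedSpace α] {U : Set α}
    (hU : IsOpen U) (x : α) : frontier (connectedComponentIn U x) ⊆ Uᶜ := by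
  intro z hz hzU
  obtain ⟨w, hwz, hwx⟩ := mem_closure_iff_nhds.mp hz.1 _
    (hU.connectedComponentIn.mem_nhds (mem_connectedComponentIn hzU))
  have hcomp : connectedComponentIn U x = connectedComponentIn U z :=
    (connectedComponentIn_eq hwx).trans (connectedComponentIn_eq hwz).symm
  refine hz.2 (hU.connectedComponentIn.interior_eq.symm ▸ ?_)
  exact hcomp ▸ mem_connectedComponentIn hzU

theorem Continuous.ite_mem_connectedComponentIn_compl [LocallyConnectedSpace α]
    {X : Type*} [TopologicalSpace X] {F : α → X} (hF : Continuous F) {c : X} {M : Set α}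
    (hM : IsClosed M) (hMF : M ⊆ F ⁻¹' {c}) (x : α) :
    Continuous fun z => if z ∈ connectedComponentIn Mᶜ x then F z else c :=
  hF.if (fun _ hz => hMF (compl_compl M ▸
    frontier_connectedComponentIn_subset hM.isOpen_compl x hz)) continuous_const

end ConnectedComponentIn

/-- For `β = [b₀, b₁]` this is the boundary of `[x₀, x₁] × β` with `(a, b₀)` removed. -/
def frameDiff {α β : Type*} [Preorder α] (x₀ a x₁ : α) (b₀ b₁ : β) : Set (α × β) :=
  Icc x₀ x₁ ×ˢ {b₁} ∪ ({x₀} ×ˢ univ ∪ Ico x₀ a ×ˢ {b₀}) ∪ ({x₁} ×ˢ univ ∪ Ioc a x₁ ×ˢ {b₀})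

theorem isPreconnected_frameDiff {α β : Type*} [ConditionallyCompleteLinearOrder α]
    [TopologicalSpace α] [OrderTopology α] [DenselyOrdered α] [TopologicalSpace β]
    [PreconnectedSpace β] {x₀ a x₁ : α} (h₀ : x₀ < a) (h₁ : a < x₁) (b₀ b₁ : β) :
    IsPreconnected (frameDiff x₀ a x₁ b₀ b₁) := by
  have hside (x : α) : IsPreconnected ({x} ×ˢ (univ : Set β)) :=
    isPreconnected_singleton.prod isPreconnected_univ
  have hleft : IsPreconnected ({x₀} ×ˢ univ ∪ Ico x₀ a ×ˢ {b₀}) :=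
    (hside x₀).union (x₀, b₀) (by simp) (by simp [h₀])
      (isPreconnected_Ico.prod isPreconnected_singleton)
  have hright : IsPreconnected ({x₁} ×ˢ univ ∪ Ioc a x₁ ×ˢ {b₀}) :=
    (hside x₁).union (x₁, b₀) (by simp) (by simp [h₁])
      (isPreconnected_Ioc.prod isPreconnected_singleton)
  have htop : IsPreconnected (Icc x₀ x₁ ×ˢ {b₁}) := isPreconnected_Icc.prod isPreconnected_singleton
  exact (htop.union (x₀, b₁) (by simp [(h₀.trans h₁).le]) (by simp) hleft).union (x₁, b₁)
    (by simp [(h₀.trans h₁).le]) (by simp) hright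

theorem stmt_6_general {X : Type*} [TopologicalSpace X] [T2Space X]
    (p₁ pstar : X) (hne : p₁ ≠ pstar)
    (f : unitInterval → X)
    (s₀ : unitInterval) (hs₀0 : s₀ ≠ 0) (hs₀1 : s₀ ≠ 1)
    (hfs : f ⁻¹' {pstar} = {s₀})
    (F : unitInterval × unitInterval → X) (hF : Continuous F)
    (hFbot : ∀ s, F (s, 0) = f s) (hFtop : ∀ s, F (s, 1) = p₁)
    (hFleft : ∀ t, F (0, t) = p₁) (hFright : ∀ t, F (1, t) = p₁)
    (M₀ O : Set (unitInterval × unitInterval))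
    (hM₀ : M₀ = connectedComponentIn (F ⁻¹' {pstar}) (s₀, 0))
    (hO : O = connectedComponentIn M₀ᶜ (0, 1))
    (G : unitInterval × unitInterval → X)
    (hG : ∀ z, G z = if z ∈ O then F z else pstar) :
    Continuous G ∧
      (∀ s, G (s, 0) = f s) ∧ (∀ s, G (s, 1) = p₁) ∧
      (∀ t, G (0, t) = p₁) ∧ (∀ t, G (1, t) = p₁) ∧
      ∀ p₀ : X, p₀ ∉ Set.range f → p₀ ≠ pstar → p₀ ≠ p₁ → G ⁻¹' {p₀} ⊆ O := by
  have hfpstar (s : unitInterval) : f s = pstar ↔ s = s₀ := Set.ext_iff.mp hfs s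
  have hM₀F : M₀ ⊆ F ⁻¹' {pstar} := hM₀ ▸ connectedComponentIn_subset _ _
  have hM₀closed : IsClosed M₀ := hM₀ ▸ (isClosed_singleton.preimage hF).connectedComponentIn _
  have hGcont : Continuous G := by
    rw [funext hG, hO]
    exact hF.ite_mem_connectedComponentIn_compl hM₀closed hM₀F (0, 1)
  have hframe : frameDiff 0 s₀ 1 0 1 ⊆ O := by
    rw [hO]
    refine (isPreconnected_frameDiff (pos_iff_ne_zero.mpr hs₀0)
      (lt_of_le_of_ne unitInterval.le_one' hs₀1) 0 1).subset_connectedComponentIn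
        (by simp [frameDiff]) fun ⟨s, t⟩ hz hzM => ?_
    have hFz : F (s, t) = pstar := hM₀F hzM
    obtain (⟨-, rfl⟩ | ⟨rfl, -⟩ | ⟨⟨-, hlt⟩, rfl⟩) | ⟨rfl, -⟩ | ⟨⟨hgt, -⟩, rfl⟩ := hz
    · exact hne (hFtop s ▸ hFz)
    · exact hne (hFleft t ▸ hFz)
    · exact hlt.ne ((hfpstar s).mp (hFbot s ▸ hFz))
    · exact hne (hFright t ▸ hFz)
    · exact hgt.ne' ((hfpstar s).mp (hFbot s ▸ hFz))
  have hGF {z} (hz : z ∈ frameDiff 0 s₀ 1 0 1) : G z = F z := by rw [hG, if_pos (hframe hz)]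
  refine ⟨hGcont, fun s => ?_, fun s => ?_, fun t => ?_, fun t => ?_, ?_⟩
  · rcases lt_trichotomy s s₀ with hlt | rfl | hgt
    · rw [hGF (by simp [frameDiff, hlt]), hFbot]
    · rw [hG, hFbot, (hfpstar s).mpr rfl, ite_self]
    · rw [hGF (by simp [frameDiff, hgt, unitInterval.le_one']), hFbot]
  · rw [hGF (by simp [frameDiff, unitInterval.le_one']), hFtop]
  · rw [hGF (by simp [frameDiff]), hFleft]
  · rw [hGF (by simp [frameDiff]), hFright]
  · intro p₀ _ hp₀ _ z hz
    by_contra hzO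
    have hGz : G z = p₀ := hz
    exact hp₀ (by rw [← hGz, hG, if_neg hzO])

/-- Given a null-homotopy `F` of a loop `f` hitting `p*` exactly once, redefining
`F` to be constantly `p*` outside the connected component `O` of the complement of
the component `M₀` of `F ⁻¹' {p*}` through `(s₀,0)` (where `O` contains the top
edge) yields a continuous null-homotopy `G` of `f` such that for every `p₀` not in
the image of `f` and distinct from `p*` and `p₁`, `G ⁻¹' {p₀} ⊆ O`. -/
theorem stmt_6 {X : Type*} [TopologicalSpace X] [T2Space X]
    (p₁ pstar : X) (hne : p₁ ≠ pstar)
    (f : unitInterval → X) (hf : Continuous f) (hf0 : f 0 = p₁) (hf1 : f 1 = p₁)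
    (s₀ : unitInterval) (hs₀0 : s₀ ≠ 0) (hs₀1 : s₀ ≠ 1)
    (hfs : f ⁻¹' {pstar} = {s₀})
    (F : unitInterval × unitInterval → X) (hF : Continuous F)
    (hFbot : ∀ s, F (s, 0) = f s) (hFtop : ∀ s, F (s, 1) = p₁)
    (hFleft : ∀ t, F (0, t) = p₁) (hFright : ∀ t, F (1, t) = p₁)
    (M₀ O : Set (unitInterval × unitInterval))
    (hM₀ : M₀ = connectedComponentIn (F ⁻¹' {pstar}) (s₀, 0))
    (hO : O = connectedComponentIn M₀ᶜ (0, 1))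
    (G : unitInterval × unitInterval → X)
    (hG : ∀ z, G z = if z ∈ O then F z else pstar) :
    Continuous G ∧
      (∀ s, G (s, 0) = f s) ∧ (∀ s, G (s, 1) = p₁) ∧
      (∀ t, G (0, t) = p₁) ∧ (∀ t, G (1, t) = p₁) ∧
      ∀ p₀ : X, p₀ ∉ Set.range f → p₀ ≠ pstar → p₀ ≠ p₁ → G ⁻¹' {p₀} ⊆ O :=
  stmt_6_general p₁ pstar hne f s₀ hs₀0 hs₀1 hfs F hF hFbot hFtop hFleft hFright M₀ O hM₀ hO G hG
end
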